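/- arXiv:2104.14048 — 2 statements merged into one kernel-verified Lean document; each statement's English description precedes it below -/
import Mathlib

section
/- Let L be a bounded lattice with bounds 0 and 1, and let u, v ∈ L. Then con(u,1) ⊔ con(v,1) = con(u ⊓ v, 1) in the congruence lattice of L. -/
set_option linter.unusedVariables false

/-- A lattice congruence: an equivalence relation compatible with `⊔` and `⊓`. -/
structure LatticeCon' (L : Type*) [Lattice L] : Type _ where
  r : L → L → Prop
  refl : ∀ x, r x x
  symm : ∀ {x y}, r x y → r y x
  trans : ∀ {x y z}, r x y → r y z → r x z
  sup : ∀ {a b c d}, r a b → r c d → r (a ⊔ c) (b ⊔ d)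
  inf : ∀ {a b c d}, r a b → r c d → r (a ⊓ c) (b ⊓ d)

namespace LatticeCon'

variable {L : Type*} [Lattice L]

theorem ext' {c d : LatticeCon' L} (h : c.r = d.r) : c = d := by
  cases c; cases d; cases h; rfl

instance : PartialOrder (LatticeCon' L) where
  le c d := ∀ x y, c.r x y → d.r x y
  le_refl _ _ _ h := h
  le_trans _ _ _ hab hbc x y h := hbc x y (hab x y h)
  le_antisymm a b hab hba :=
    ext' (by funext x y; exact propext ⟨hab x y, hba x y⟩)

instance : InfSet (LatticeCon' L) where
  sInf S :=
    { r := fun x y => ∀ c ∈ S, c.r x y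
      refl := fun x c _ => c.refl x
      symm := fun h c hc => c.symm (h c hc)
      trans := fun h1 h2 c hc => c.trans (h1 c hc) (h2 c hc)
      sup := fun h1 h2 c hc => c.sup (h1 c hc) (h2 c hc)
      inf := fun h1 h2 c hc => c.inf (h1 c hc) (h2 c hc) }

/-- The complete lattice `Con L` of congruences of `L`. -/
instance : CompleteLattice (LatticeCon' L) :=
  completeLatticeOfInf _ fun S =>
    ⟨fun c hc x y h => h c hc, fun b hb x y h c hc => hb hc x y h⟩

end LatticeCon'

/-- `latticeCon a b` is the principal congruence `con(a,b)`, the smallest congruence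
collapsing `a` and `b`. -/
def latticeCon {L : Type*} [Lattice L] (a b : L) : LatticeCon' L :=
  sInf {c : LatticeCon' L | c.r a b}

/- Proof idea: a congruence collapsing `a ≤ c` collapses every `b ∈ [a, c]` with `c` (join `a ≡ c`
with `b`), so `con(u,1), con(v,1) ≤ con(u ⊓ v, 1)`; conversely, meeting `u ≡ 1` with `v ≡ 1` gives
`u ⊓ v ≡ 1` in `con(u,1) ⊔ con(v,1)`. -/

namespace LatticeCon'

variable {L : Type*} [Lattice L]

theorem r_of_le {c d : LatticeCon' L} (h : c ≤ d) {x y : L} (hxy : c.r x y) : d.r x y :=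
  h x y hxy

theorem r_sup_right (c : LatticeCon' L) {a b : L} (h : c.r a b) (x : L) : c.r (a ⊔ x) (b ⊔ x) :=
  c.sup h (c.refl x)

end LatticeCon'

section latticeCon

variable {L : Type*} [Lattice L]

theorem latticeCon_rel (a b : L) : (latticeCon a b).r a b :=
  fun _ hc => hc

theorem latticeCon_le_iff {a b : L} {c : LatticeCon' L} : latticeCon a b ≤ c ↔ c.r a b :=
  ⟨fun h => h a b (latticeCon_rel a b), fun h _ _ hxy => hxy c h⟩

theorem latticeCon_le_latticeCon_of_le {a b c : L} (hab : a ≤ b) (hbc : b ≤ c) :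
    latticeCon b c ≤ latticeCon a c := by
  have h := (latticeCon a c).r_sup_right (latticeCon_rel a c) b
  rw [sup_eq_right.mpr hab, sup_eq_left.mpr hbc] at h
  exact latticeCon_le_iff.mpr h

theorem latticeCon_inf_le_sup (a b c : L) :
    latticeCon (a ⊓ b) c ≤ latticeCon a c ⊔ latticeCon b c := by
  have h := (latticeCon a c ⊔ latticeCon b c).inf
    (LatticeCon'.r_of_le le_sup_left (latticeCon_rel a c))
    (LatticeCon'.r_of_le le_sup_right (latticeCon_rel b c))
  rw [inf_idem] at h
  exact latticeCon_le_iff.mpr h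

end latticeCon

/-- in a bounded lattice, `con(u,1) ⊔ con(v,1) = con(u ⊓ v, 1)`. -/
theorem con_top_sup_con_top
    {L : Type*} [Lattice L] [BoundedOrder L] (u v : L) :
    latticeCon u (⊤ : L) ⊔ latticeCon v (⊤ : L) = latticeCon (u ⊓ v) (⊤ : L) :=
  le_antisymm
    (sup_le (latticeCon_le_latticeCon_of_le inf_le_left le_top)
      (latticeCon_le_latticeCon_of_le inf_le_right le_top))
    (latticeCon_inf_le_sup u v ⊤)
end

section
/- Let D be a finite distributive lattice and P = J(D). For every element d ∈ D there is an interval of some finite chain C colored onto P whose color set joins to d; concretely: there exists a finite chain C, a surjective coloring col of its prime intervals by P, and x ≤ y in C with ⋁ colset[x,y] = d. Hence D itself is chain representable (Rep C = D for a suitable colored chain C). -/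
set_option linter.unusedVariables false

/-- The color set of the interval `[x, y]`: the set of colors of the prime intervals
(covering pairs) of the chain `C` contained in `[x, y]`. -/
def colorSet {C P : Type*} [PartialOrder C] (col : ∀ u v : C, u ⋖ v → P) (x y : C) : Set P :=
  {p | ∃ u v, ∃ h : u ⋖ v, x ≤ u ∧ v ≤ y ∧ col u v h = p}

variable {D : Type*} [DistribLattice D] [Fintype D] [BoundedOrder D]

/-- A finite distributive lattice is a complete lattice, so `sSup` makes sense. -/
noncomputable local instance : CompleteLattice D := Fintype.toCompleteLattice D

/-!
Take the chain whose consecutive prime intervals are colored, block after block, by the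
join-irreducibles below `d`, for every `d ∈ D`. Every color is join-irreducible and every
join-irreducible `p` occurs (in the block of `d = p`). The interval spanning the block of `d` has
exactly the join-irreducibles below `d` as colors, and their join is `d`.
-/

section ListColoring

variable {α : Type*}

theorem Fin.val_add_one_eq_of_covBy {n : ℕ} {u v : Fin n} (h : u ⋖ v) : (u : ℕ) + 1 = v :=
  Nat.covBy_iff_add_one_eq.1 (Fin.covBy_iff.1 h)

theorem Fin.covBy_of_val_add_one_eq {n : ℕ} {u v : Fin n} (h : (u : ℕ) + 1 = v) : u ⋖ v :=
  Fin.covBy_iff.2 (Nat.covBy_iff_add_one_eq.2 h)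

/-- The chain `0 < 1 < ⋯ < L.length` whose prime interval `[i, i + 1]` has color `L[i]`. -/
def listColoring (L : List α) (u v : Fin (L.length + 1)) (h : u ⋖ v) : α :=
  L[(u : ℕ)]'(by have := Fin.val_add_one_eq_of_covBy h; omega)

theorem exists_listColoring_eq_iff {L : List α} {p : α} :
    (∃ u v h, listColoring L u v h = p) ↔ p ∈ L := by
  constructor
  · rintro ⟨u, v, h, rfl⟩
    exact List.getElem_mem _
  · intro hp
    obtain ⟨i, hi, rfl⟩ := List.getElem_of_mem hp
    exact ⟨⟨i, by omega⟩, ⟨i + 1, by omega⟩, Fin.covBy_of_val_add_one_eq rfl, rfl⟩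

theorem mem_colorSet_listColoring {L : List α} {x y : Fin (L.length + 1)} {p : α} :
    p ∈ colorSet (listColoring L) x y ↔
      ∃ (i : ℕ) (hi : i < L.length), x ≤ i ∧ i < y ∧ L[i] = p := by
  constructor
  · rintro ⟨u, v, h, hxu, hvy, rfl⟩
    have := Fin.val_add_one_eq_of_covBy h
    have hxu : (x : ℕ) ≤ u := hxu
    have hvy : (v : ℕ) ≤ y := hvy
    exact ⟨u, by omega, hxu, by omega, rfl⟩
  · rintro ⟨i, hi, hxi, hiy, rfl⟩
    exact ⟨⟨i, by omega⟩, ⟨i + 1, by omega⟩, Fin.covBy_of_val_add_one_eq rfl, hxi,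
      Fin.le_def.2 hiy, rfl⟩

theorem List.IsInfix.exists_colorSet_listColoring_eq {L M : List α} (h : M <:+: L) :
    ∃ x y : Fin (L.length + 1), x ≤ y ∧ colorSet (listColoring L) x y = {p | p ∈ M} := by
  obtain ⟨A, B, rfl⟩ := h
  refine ⟨⟨A.length, by simp only [List.length_append]; omega⟩,
    ⟨A.length + M.length, by simp only [List.length_append]; omega⟩,
    Fin.le_def.2 (Nat.le_add_right _ _), ?_⟩
  ext p
  simp only [mem_colorSet_listColoring, Set.mem_ofPred_eq, List.mem_iff_getElem]
  constructor
  · rintro ⟨i, hi, hAi, hiM, rfl⟩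
    refine ⟨i - A.length, by omega, ?_⟩
    rw [List.getElem_append_left (by simp only [List.length_append]; omega),
      List.getElem_append_right hAi]
  · rintro ⟨j, hj, rfl⟩
    refine ⟨A.length + j, by simp only [List.length_append]; omega, Nat.le_add_right _ _,
      Nat.add_lt_add_left hj _, ?_⟩
    rw [List.getElem_append_left (by simp only [List.length_append]; omega),
      List.getElem_append_right (by omega)]
    simp

end ListColoring

section SupIrredChain

variable {α : Type*} [CompleteLattice α]

theorem sSup_supIrred_le_eq [WellFoundedLT α] (d : α) : sSup {p | SupIrred p ∧ p ≤ d} = d := by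
  refine le_antisymm (sSup_le fun p hp => hp.2) ?_
  obtain ⟨s, hs, hirr⟩ := exists_supIrred_decomposition d
  calc d = s.sup id := hs.symm
    _ ≤ sSup {p | SupIrred p ∧ p ≤ d} :=
      Finset.sup_le fun p hp => le_sSup ⟨hirr hp, hs ▸ Finset.le_sup (f := id) hp⟩

variable [Fintype α]

open Classical in
noncomputable def supIrredBelow (d : α) : Finset α := {p | SupIrred p ∧ p ≤ d}

theorem mem_supIrredBelow {d p : α} : p ∈ supIrredBelow d ↔ SupIrred p ∧ p ≤ d := by
  classical
  simp [supIrredBelow]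

variable (α) in
noncomputable def supIrredChain : List α :=
  Finset.univ.toList.flatMap fun d => (supIrredBelow d).toList

theorem mem_supIrredChain {p : α} : p ∈ supIrredChain α ↔ SupIrred p := by
  simp only [supIrredChain, List.mem_flatMap, Finset.mem_toList, Finset.mem_univ, true_and,
    mem_supIrredBelow]
  exact ⟨fun ⟨_, hp, _⟩ => hp, fun hp => ⟨p, hp, le_rfl⟩⟩

theorem supIrredBelow_infix_supIrredChain (d : α) : (supIrredBelow d).toList <:+: supIrredChain α :=
  List.infix_flatMap_of_mem (Finset.mem_toList.2 (Finset.mem_univ d))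
    fun d => (supIrredBelow d).toList

theorem exists_colorSet_supIrredChain_eq (d : α) :
    ∃ x y : Fin ((supIrredChain α).length + 1), x ≤ y ∧
      sSup (colorSet (listColoring (supIrredChain α)) x y) = d := by
  obtain ⟨x, y, hxy, hcol⟩ :=
    (supIrredBelow_infix_supIrredChain d).exists_colorSet_listColoring_eq
  have hcolors : {p | p ∈ (supIrredBelow d).toList} = {p | SupIrred p ∧ p ≤ d} := by
    ext p
    simp [mem_supIrredBelow]
  exact ⟨x, y, hxy, by rw [hcol, hcolors, sSup_supIrred_le_eq]⟩

end SupIrredChain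

/-- every element of a finite distributive lattice `D` is the join of the
color set of an interval of some finite chain colored onto `J(D)`; hence `D` itself is
chain representable. -/
theorem D_is_chain_representable :
    (∀ d : D, ∃ (n : ℕ) (col : ∀ u v : Fin (n + 1), u ⋖ v → D),
      (∀ u v (h : u ⋖ v), SupIrred (col u v h)) ∧
      (∀ p : D, SupIrred p → ∃ u v h, col u v h = p) ∧
      ∃ x y : Fin (n + 1), x ≤ y ∧ sSup (colorSet col x y) = d) ∧
    ∃ (n : ℕ) (col : ∀ u v : Fin (n + 1), u ⋖ v → D),
      (∀ u v (h : u ⋖ v), SupIrred (col u v h)) ∧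
      (∀ p : D, SupIrred p → ∃ u v h, col u v h = p) ∧
      {d : D | ∃ x y : Fin (n + 1), x ≤ y ∧ sSup (colorSet col x y) = d} = Set.univ := by
  have colors_supIrred : ∀ u v (h : u ⋖ v), SupIrred (listColoring (supIrredChain D) u v h) :=
    fun u v h => mem_supIrredChain.1 (exists_listColoring_eq_iff.1 ⟨u, v, h, rfl⟩)
  have onto_supIrred : ∀ p : D, SupIrred p → ∃ u v h, listColoring (supIrredChain D) u v h = p :=
    fun p hp => exists_listColoring_eq_iff.2 (mem_supIrredChain.2 hp)
  exact ⟨fun d => ⟨_, _, colors_supIrred, onto_supIrred, exists_colorSet_supIrredChain_eq d⟩,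
    _, _, colors_supIrred, onto_supIrred,
    Set.eq_univ_of_forall exists_colorSet_supIrredChain_eq⟩
end
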